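/- arXiv:2404.11920 — 5 statements merged into one kernel-verified Lean document; each statement's English description precedes it below -/
import Mathlib

section
/- For every real n×m matrix A there exist matrices U in the orthogonal group O(n) (i.e. UᵀU = I) and V in the orthogonal group O(m), and a real n×m matrix Σ with A = U * Σ * Vᵀ, such that Σ i j = 0 whenever the indices i and j are distinct (as natural numbers), every 'diagonal' entry of Σ is nonnegative, and the diagonal entries are weakly decreasing: if (i : ℕ) ≤ (j : ℕ) and both index diagonal entries, then Σ j j ≤ Σ i i. -/
/-!
Let `v` be an orthonormal eigenbasis of `T†T`, ordered so that its eigenvalues `σⱼ²` decrease.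
Then `⟪T vᵢ, T vⱼ⟫ = ⟪vᵢ, T†T vⱼ⟫ = σⱼ² δᵢⱼ`, so the vectors `T vⱼ` are pairwise orthogonal with
`‖T vⱼ‖ = σⱼ`. The normalised vectors `σⱼ⁻¹ T vⱼ` with `σⱼ > 0` extend to an orthonormal basis `u`
of the target, and `T vⱼ = σⱼ uⱼ` for every `j`: the matrix of `T` in the bases `v`, `u` is
rectangular diagonal. For `T = A` the change-of-basis matrices to the standard bases are orthogonal.
-/

open Matrix Module InnerProductSpace

def Matrix.rectDiagonal {α : Type*} [Zero α] {n m : ℕ} (d : ℕ → α) :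
    Matrix (Fin n) (Fin m) α :=
  of fun i j => if (i : ℕ) = j then d i else 0

namespace LinearMap

variable {𝕜 : Type*} [RCLike 𝕜]
  {E : Type*} [NormedAddCommGroup E] [InnerProductSpace 𝕜 E]
  {F : Type*} [NormedAddCommGroup F] [InnerProductSpace 𝕜 F]
  (T : E →ₗ[𝕜] F) {m n : ℕ}

theorem toMatrix_eq_rectDiagonal {v : OrthonormalBasis (Fin m) 𝕜 E}
    {u : OrthonormalBasis (Fin n) 𝕜 F} {d : ℕ → 𝕜}
    (h : ∀ j : Fin m, T (v j) = if h : (j : ℕ) < n then d j • u ⟨j, h⟩ else 0) :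
    toMatrix v.toBasis u.toBasis T = rectDiagonal d := by
  ext i j
  rw [toMatrix_apply, OrthonormalBasis.coe_toBasis, OrthonormalBasis.coe_toBasis_repr_apply,
    u.repr_apply_apply, h j, rectDiagonal, of_apply]
  split_ifs with hj hij hij
  · rw [inner_smul_right, orthonormal_iff_ite.mp u.orthonormal, if_pos (Fin.ext hij), mul_one,
      hij]
  · rw [inner_smul_right, orthonormal_iff_ite.mp u.orthonormal,
      if_neg (by simp [Fin.ext_iff, hij]), mul_zero]
  · omega
  · exact inner_zero_right _

variable [FiniteDimensional 𝕜 E] [FiniteDimensional 𝕜 F]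

theorem lt_finrank_of_singularValues_pos {k : ℕ} (hk : 0 < T.singularValues k) :
    k < finrank 𝕜 E ∧ k < finrank 𝕜 F := by
  rw [singularValues_pos_iff_lt_finrank_range] at hk
  exact ⟨hk.trans_le T.finrank_range_le, hk.trans_le (Submodule.finrank_le _)⟩

theorem inner_apply_eigenvectorBasis_adjoint_comp_self (hm : finrank 𝕜 E = m) (i j : Fin m) :
    ⟪T (T.isSymmetric_adjoint_comp_self.eigenvectorBasis hm i),
      T (T.isSymmetric_adjoint_comp_self.eigenvectorBasis hm j)⟫_𝕜 =
      if i = j then ((T.singularValues j ^ 2 : ℝ) : 𝕜) else 0 := by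
  rw [← adjoint_inner_right, ← comp_apply, IsSymmetric.apply_eigenvectorBasis, inner_smul_right,
    orthonormal_iff_ite.mp (OrthonormalBasis.orthonormal _), T.sq_singularValues_fin hm]
  split_ifs <;> simp

theorem norm_apply_eigenvectorBasis_adjoint_comp_self (hm : finrank 𝕜 E = m) (j : Fin m) :
    ‖T (T.isSymmetric_adjoint_comp_self.eigenvectorBasis hm j)‖ = T.singularValues j := by
  have h := T.inner_apply_eigenvectorBasis_adjoint_comp_self hm j j
  rw [if_pos rfl, inner_self_eq_norm_sq_to_K] at h
  exact (pow_left_inj₀ (norm_nonneg _) (T.singularValues_nonneg j) two_ne_zero).mp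
    (by exact_mod_cast h)

theorem orthonormal_inv_singularValues_smul_apply_eigenvectorBasis (hm : finrank 𝕜 E = m) :
    Orthonormal 𝕜 fun j : {j : Fin m // 0 < T.singularValues j} =>
      (T.singularValues j : 𝕜)⁻¹ • T (T.isSymmetric_adjoint_comp_self.eigenvectorBasis hm j) := by
  rw [orthonormal_iff_ite]
  rintro ⟨i, hi⟩ ⟨j, hj⟩
  simp only [inner_smul_left, inner_smul_right, T.inner_apply_eigenvectorBasis_adjoint_comp_self hm,
    Subtype.mk.injEq]
  split_ifs with hij
  · subst hij
    have : (T.singularValues i : 𝕜) ≠ 0 := by exact_mod_cast hi.ne'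
    simp only [map_inv₀, RCLike.conj_ofReal]
    push_cast
    field_simp
  · simp

theorem exists_orthonormalBasis_apply_eq_singularValues_smul (hm : finrank 𝕜 E = m)
    (hn : finrank 𝕜 F = n) :
    ∃ (v : OrthonormalBasis (Fin m) 𝕜 E) (u : OrthonormalBasis (Fin n) 𝕜 F), ∀ j : Fin m,
      T (v j) = if h : (j : ℕ) < n then (T.singularValues j : 𝕜) • u ⟨j, h⟩ else 0 := by
  set v := T.isSymmetric_adjoint_comp_self.eigenvectorBasis hm
  set σ := T.singularValues
  -- Reindexed by `Fin n` to feed the basis extension; positive singular values sit below `m` and `n`.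
  let w : Fin n → F := fun i => if h : (i : ℕ) < m then (σ i : 𝕜)⁻¹ • T (v ⟨i, h⟩) else 0
  let s : Set (Fin n) := {i | 0 < σ i}
  have hw : Orthonormal 𝕜 (s.domRestrict w) := by
    have hsm (i : s) : (i : ℕ) < m := hm ▸ (T.lt_finrank_of_singularValues_pos i.2).1
    convert (T.orthonormal_inv_singularValues_smul_apply_eigenvectorBasis hm).comp
      (fun i : s => ⟨⟨i, hsm i⟩, i.2⟩)
      (fun i j h => by simpa [Fin.ext_iff, Subtype.ext_iff] using h)
    ext i
    exact dif_pos (hsm i)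
  obtain ⟨u, hu⟩ := hw.exists_orthonormalBasis_extension_of_card_eq (by simp [hn])
  refine ⟨v, u, fun j => ?_⟩
  rcases (T.singularValues_nonneg j).eq_or_lt with hzero | hpos
  · have hTv : T (v j) = 0 := by
      rw [← norm_eq_zero, T.norm_apply_eigenvectorBasis_adjoint_comp_self hm, ← hzero]
    simp [hTv, ← hzero, σ]
  · have hjn : (j : ℕ) < n := hn ▸ (T.lt_finrank_of_singularValues_pos hpos).2
    have : (σ j : 𝕜) ≠ 0 := by exact_mod_cast hpos.ne'
    rw [dif_pos hjn, hu _ hpos]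
    simp [w, smul_smul, this]

end LinearMap

theorem OrthonormalBasis.toMatrix_flip_eq_conjTranspose {𝕜 E ι ι' : Type*} [RCLike 𝕜]
    [NormedAddCommGroup E] [InnerProductSpace 𝕜 E] [Fintype ι] [Fintype ι'] [DecidableEq ι]
    [DecidableEq ι'] (a : OrthonormalBasis ι 𝕜 E) (b : OrthonormalBasis ι' 𝕜 E) :
    b.toBasis.toMatrix a = (a.toBasis.toMatrix b)ᴴ :=
  calc b.toBasis.toMatrix a
      = (a.toBasis.toMatrix b)ᴴ * a.toBasis.toMatrix b * b.toBasis.toMatrix a := by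
        rw [a.toMatrix_orthonormalBasis_conjTranspose_mul_self, Matrix.one_mul]
    _ = (a.toBasis.toMatrix b)ᴴ := by
        rw [Matrix.mul_assoc, ← a.coe_toBasis, ← b.coe_toBasis, Basis.toMatrix_mul_toMatrix_flip,
          Matrix.mul_one]

theorem Matrix.exists_unitary_mul_rectDiagonal_singularValues_mul_star {𝕜 : Type*} [RCLike 𝕜]
    {n m : ℕ} (A : Matrix (Fin n) (Fin m) 𝕜) :
    ∃ U ∈ unitaryGroup (Fin n) 𝕜, ∃ V ∈ unitaryGroup (Fin m) 𝕜,
      A = U * (rectDiagonal fun k => ((toLpLin 2 2 A).singularValues k : 𝕜) :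
        Matrix (Fin n) (Fin m) 𝕜) * star V := by
  obtain ⟨v, u, hvu⟩ := (toLpLin 2 2 A).exists_orthonormalBasis_apply_eq_singularValues_smul
    finrank_euclideanSpace_fin finrank_euclideanSpace_fin
  let eₘ := EuclideanSpace.basisFun (Fin m) 𝕜
  let eₙ := EuclideanSpace.basisFun (Fin n) 𝕜
  refine ⟨_, eₙ.toMatrix_orthonormalBasis_mem_unitary u, _,
    eₘ.toMatrix_orthonormalBasis_mem_unitary v, ?_⟩
  rw [← LinearMap.toMatrix_eq_rectDiagonal _ hvu, star_eq_conjTranspose,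
    ← eₘ.toMatrix_flip_eq_conjTranspose, ← eₘ.coe_toBasis, ← u.coe_toBasis,
    basis_toMatrix_mul_linearMap_toMatrix_mul_basis_toMatrix]
  exact (LinearMap.toMatrix_toLin _ _ A).symm

/-- Classical SVD of a real `n × m` matrix: `A = U * Σ * Vᵀ` with `U ∈ O(n)`, `V ∈ O(m)`,
`Σ` rectangular-diagonal with nonnegative, weakly decreasing diagonal entries. -/
theorem real_svd (n m : ℕ) (A : Matrix (Fin n) (Fin m) ℝ) :
    ∃ (U : Matrix (Fin n) (Fin n) ℝ) (V : Matrix (Fin m) (Fin m) ℝ)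
      (D : Matrix (Fin n) (Fin m) ℝ),
      Uᵀ * U = 1 ∧ Vᵀ * V = 1 ∧ A = U * D * Vᵀ ∧
      (∀ (i : Fin n) (j : Fin m), (i : ℕ) ≠ (j : ℕ) → D i j = 0) ∧
      (∀ (i : Fin n) (j : Fin m), (i : ℕ) = (j : ℕ) → 0 ≤ D i j) ∧
      (∀ (i : Fin n) (i' : Fin m) (j : Fin n) (j' : Fin m),
        (i : ℕ) = (i' : ℕ) → (j : ℕ) = (j' : ℕ) → (i : ℕ) ≤ (j : ℕ) →
        D j j' ≤ D i i') := by
  obtain ⟨U, hU, V, hV, hA⟩ := A.exists_unitary_mul_rectDiagonal_singularValues_mul_star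
  set T := toLpLin 2 2 A
  rw [star_eq_conjTranspose, conjTranspose_eq_transpose_of_trivial] at hA
  refine ⟨U, V, _, (mem_orthogonalGroup_iff' _ _).mp hU, (mem_orthogonalGroup_iff' _ _).mp hV, hA,
    ?_, ?_, ?_⟩
  · intro i j hij
    simp [rectDiagonal, hij]
  · intro i j hij
    simp [rectDiagonal, hij, T.singularValues_nonneg]
  · intro i i' j j' hi hj hij
    simpa [rectDiagonal, hi, hj] using T.singularValues_antitone hij
end

section
/- For every complex n×m matrix A there exist matrices U in the unitary group U(n) (i.e. UᴴU = I) and V in the unitary group U(m), and a complex n×m matrix Σ with A = U * Σ * Vᴴ, such that Σ i j = 0 whenever the indices i and j are distinct (as natural numbers), every diagonal entry of Σ is a nonnegative real number (it equals the coercion of a nonnegative real), and the diagonal entries are weakly decreasing: if (i : ℕ) ≤ (j : ℕ) and both index diagonal entries, then Re(Σ j j) ≤ Re(Σ i i). -/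
/-! Let `v` be an orthonormal eigenbasis of `Aᴴ A` with eigenvalues `σ₀² ≥ σ₁² ≥ ⋯`. The vectors
`A vⱼ` are pairwise orthogonal with `‖A vⱼ‖ = σⱼ`, so the `A vⱼ / σⱼ` with `σⱼ > 0` form an
orthonormal family in the codomain, which extends to an orthonormal basis `u`. In the bases `v` and
`u` the matrix of `A` is rectangular diagonal with diagonal `σ`. -/

open Matrix Module InnerProductSpace

namespace LinearMap

variable {𝕜 : Type*} [RCLike 𝕜]
  {E : Type*} [NormedAddCommGroup E] [InnerProductSpace 𝕜 E] [FiniteDimensional 𝕜 E]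
  {F : Type*} [NormedAddCommGroup F] [InnerProductSpace 𝕜 F] [FiniteDimensional 𝕜 F]
  (T : E →ₗ[𝕜] F) {m : ℕ} (hm : finrank 𝕜 E = m)

noncomputable def rightSingularVectors : OrthonormalBasis (Fin m) 𝕜 E :=
  T.isSymmetric_adjoint_comp_self.eigenvectorBasis hm

-- `0⁻¹ = 0` makes this `0` wherever `σᵢ = 0`, so `apply_rightSingularVectors` holds for every `j`.
noncomputable def leftSingularVector (i : ℕ) : F :=
  if h : i < m then (T.singularValues i : 𝕜)⁻¹ • T (T.rightSingularVectors hm ⟨i, h⟩) else 0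

theorem inner_apply_rightSingularVectors (i j : Fin m) :
    ⟪T (T.rightSingularVectors hm i), T (T.rightSingularVectors hm j)⟫_𝕜 =
      if i = j then ((T.singularValues j ^ 2 : ℝ) : 𝕜) else 0 := by
  rw [← adjoint_inner_right, ← comp_apply, rightSingularVectors, IsSymmetric.apply_eigenvectorBasis,
    inner_smul_right, OrthonormalBasis.inner_eq_ite, T.sq_singularValues_fin hm]
  split_ifs <;> simp

theorem apply_rightSingularVectors_eq_zero {j : Fin m} (hj : T.singularValues j = 0) :
    T (T.rightSingularVectors hm j) = 0 := by
  rw [← inner_self_eq_zero (𝕜 := 𝕜), inner_apply_rightSingularVectors, if_pos rfl, hj]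
  simp

theorem apply_rightSingularVectors (j : Fin m) :
    T (T.rightSingularVectors hm j) = (T.singularValues j : 𝕜) • T.leftSingularVector hm j := by
  by_cases hj : T.singularValues j = 0
  · simp [T.apply_rightSingularVectors_eq_zero hm hj, hj]
  · simp [leftSingularVector, smul_smul, hj]

theorem lt_finrank_domain_of_singularValues_pos {i : ℕ} (hi : 0 < T.singularValues i) :
    i < finrank 𝕜 E :=
  (T.singularValues_pos_iff_lt_finrank_range.mp hi).trans_le T.finrank_range_le

theorem lt_finrank_codomain_of_singularValues_pos {i : ℕ} (hi : 0 < T.singularValues i) :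
    i < finrank 𝕜 F :=
  (T.singularValues_pos_iff_lt_finrank_range.mp hi).trans_le (Submodule.finrank_le _)

theorem orthonormal_leftSingularVector :
    Orthonormal 𝕜 ({i : ℕ | 0 < T.singularValues i}.domRestrict (T.leftSingularVector hm)) := by
  rw [orthonormal_iff_ite]
  rintro ⟨i, hi⟩ ⟨j, hj⟩
  have him : i < m := hm ▸ T.lt_finrank_domain_of_singularValues_pos hi
  have hjm : j < m := hm ▸ T.lt_finrank_domain_of_singularValues_pos hj
  simp only [Set.domRestrict_apply, leftSingularVector, dif_pos him, dif_pos hjm, inner_smul_left,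
    inner_smul_right, inner_apply_rightSingularVectors, Fin.mk.injEq, Subtype.mk.injEq]
  split_ifs with hij
  · subst hij
    have : (T.singularValues i : 𝕜) ≠ 0 := by exact_mod_cast hi.ne'
    simp only [map_inv₀, RCLike.conj_ofReal, RCLike.ofReal_pow]
    field_simp
  · simp

theorem exists_orthonormalBasis_inner_apply_eq_singularValues (hm : finrank 𝕜 E = m) {n : ℕ}
    (hn : finrank 𝕜 F = n) :
    ∃ (v : OrthonormalBasis (Fin m) 𝕜 E) (u : OrthonormalBasis (Fin n) 𝕜 F),
      ∀ i j, ⟪u i, T (v j)⟫_𝕜 = if (i : ℕ) = j then (T.singularValues j : 𝕜) else 0 := by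
  set s : Set (Fin n) := {i | 0 < T.singularValues i}
  have hs : Orthonormal 𝕜 (s.domRestrict (T.leftSingularVector hm ∘ Fin.val)) :=
    (T.orthonormal_leftSingularVector hm).comp (fun i : s ↦ ⟨i.1.1, i.2⟩)
      fun i j h ↦ Subtype.ext (Fin.ext (congrArg Subtype.val h))
  obtain ⟨u, hu⟩ := hs.exists_orthonormalBasis_extension_of_card_eq (by simp [hn])
  refine ⟨T.rightSingularVectors hm, u, fun i j ↦ ?_⟩
  rw [apply_rightSingularVectors, inner_smul_right]
  rcases (T.singularValues_nonneg j).eq_or_lt with hj | hj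
  · simp [← hj]
  · have hjn : (j : ℕ) < n := hn ▸ T.lt_finrank_codomain_of_singularValues_pos hj
    rw [show T.leftSingularVector hm j = u ⟨j, hjn⟩ from (hu ⟨j, hjn⟩ hj).symm,
      OrthonormalBasis.inner_eq_ite]
    simp [Fin.ext_iff]

end LinearMap

theorem Matrix.conjTranspose_toMatrix_mul_mul_toMatrix_apply {𝕜 : Type*} [RCLike 𝕜]
    {ι κ ι' κ' : Type*} [Fintype ι] [DecidableEq ι] [Fintype κ] [DecidableEq κ]
    (A : Matrix ι κ 𝕜) (u : ι' → EuclideanSpace 𝕜 ι) (v : κ' → EuclideanSpace 𝕜 κ)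
    (i : ι') (j : κ') :
    (((EuclideanSpace.basisFun ι 𝕜).toBasis.toMatrix u)ᴴ * A *
        (EuclideanSpace.basisFun κ 𝕜).toBasis.toMatrix v) i j =
      ⟪u i, toLpLin 2 2 A (v j)⟫_𝕜 := by
  rw [Matrix.mul_assoc, EuclideanSpace.inner_eq_star_dotProduct, toLpLin_apply, dotProduct_comm]
  rfl

/-- Classical SVD of a complex `n × m` matrix: `A = U * Σ * Vᴴ` with `U ∈ U(n)`, `V ∈ U(m)`,
`Σ` rectangular-diagonal with nonnegative real, weakly decreasing diagonal entries. -/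
theorem complex_svd (n m : ℕ) (A : Matrix (Fin n) (Fin m) ℂ) :
    ∃ (U : Matrix (Fin n) (Fin n) ℂ) (V : Matrix (Fin m) (Fin m) ℂ)
      (D : Matrix (Fin n) (Fin m) ℂ),
      Uᴴ * U = 1 ∧ Vᴴ * V = 1 ∧ A = U * D * Vᴴ ∧
      (∀ (i : Fin n) (j : Fin m), (i : ℕ) ≠ (j : ℕ) → D i j = 0) ∧
      (∀ (i : Fin n) (j : Fin m), (i : ℕ) = (j : ℕ) →
        ∃ r : ℝ, 0 ≤ r ∧ D i j = (r : ℂ)) ∧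
      (∀ (i : Fin n) (i' : Fin m) (j : Fin n) (j' : Fin m),
        (i : ℕ) = (i' : ℕ) → (j : ℕ) = (j' : ℕ) → (i : ℕ) ≤ (j : ℕ) →
        (D j j').re ≤ (D i i').re) := by
  set T := toLpLin 2 2 A
  obtain ⟨v, u, huv⟩ := T.exists_orthonormalBasis_inner_apply_eq_singularValues
    finrank_euclideanSpace_fin finrank_euclideanSpace_fin
  set U := (EuclideanSpace.basisFun (Fin n) ℂ).toBasis.toMatrix u
  set V := (EuclideanSpace.basisFun (Fin m) ℂ).toBasis.toMatrix v
  have hD : ∀ i j, (Uᴴ * A * V) i j = if (i : ℕ) = j then (T.singularValues j : ℂ) else 0 :=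
    fun i j ↦ (conjTranspose_toMatrix_mul_mul_toMatrix_apply A u v i j).trans (huv i j)
  refine ⟨U, V, Uᴴ * A * V, by simp [U], by simp [V], ?_, fun i j hij ↦ ?_, fun i j hij ↦ ?_,
    fun i i' j j' hi hj hij ↦ ?_⟩
  · have hU : U * Uᴴ = 1 := by simp [U]
    have hV : V * Vᴴ = 1 := by simp [V]
    calc A = (U * Uᴴ) * A * (V * Vᴴ) := by rw [hU, hV, Matrix.one_mul, Matrix.mul_one]
      _ = U * (Uᴴ * A * V) * Vᴴ := by simp only [Matrix.mul_assoc]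
  · rw [hD, if_neg hij]
  · exact ⟨_, T.singularValues_nonneg j, by rw [hD, if_pos hij]⟩
  · rw [hD, hD, if_pos hi, if_pos hj]
    exact T.singularValues_antitone (hi ▸ hj ▸ hij)
end

section
/- For every quaternionic n×m matrix A there exist matrices U in the compact symplectic group Sp(n) (i.e. U*U = I, where U* is the quaternionic conjugate transpose) and V in Sp(m), and a quaternionic n×m matrix Σ with A = U * Σ * V*, such that Σ i j = 0 whenever the indices i and j are distinct (as natural numbers) and every diagonal entry of Σ is the coercion to the quaternions of a nonnegative real number. -/
/-!
Let `v` be a unit vector maximising `‖A v‖` and `σ = ‖A v‖`. If `w ⊥ v`, then for every `c ∈ ℍ`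
the first-order term in `t` of `‖A (v + t w c)‖² ≤ σ² ‖v + t w c‖²` must vanish, which forces
`A w ⊥ A v`. Completing `v` and `A v / σ` to symplectic matrices `V` and `U` (by a quaternionic
Householder reflection) therefore makes `U* A V` block diagonal with `σ` in the corner, and the
remaining block is handled by induction.
-/

open Matrix Quaternion

namespace Matrix

variable {R : Type*} {k l p : ℕ}

/-- The `(k + 1) × (l + 1)` block matrix `[[c, 0], [0, M]]`. -/
def corner [Zero R] (c : R) (M : Matrix (Fin k) (Fin l) R) :
    Matrix (Fin (k + 1)) (Fin (l + 1)) R :=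
  of (Fin.cons (Fin.cons c 0) fun i => Fin.cons 0 (M i))

section Zero

variable [Zero R]

lemma eq_corner {c : R} {A : Matrix (Fin (k + 1)) (Fin (l + 1)) R} (h₀₀ : A 0 0 = c)
    (hcol : ∀ i : Fin k, A i.succ 0 = 0) (hrow : ∀ j : Fin l, A 0 j.succ = 0) :
    A = corner c (A.submatrix Fin.succ Fin.succ) := by
  ext i j
  cases i using Fin.cases <;> cases j using Fin.cases
  · exact h₀₀
  · exact hrow _
  · exact hcol _
  · rfl

variable (c : R) (M : Matrix (Fin k) (Fin l) R)

@[simp] lemma corner_zero_zero : corner c M 0 0 = c := rfl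

@[simp] lemma corner_zero_succ (j : Fin l) : corner c M 0 j.succ = 0 := rfl

@[simp] lemma corner_succ_zero (i : Fin k) : corner c M i.succ 0 = 0 := rfl

@[simp] lemma corner_succ_succ (i : Fin k) (j : Fin l) : corner c M i.succ j.succ = M i j := rfl

lemma corner_zero : corner (0 : R) (0 : Matrix (Fin k) (Fin l) R) = 0 := by
  ext i j
  cases i using Fin.cases <;> cases j using Fin.cases <;> simp

end Zero

lemma corner_mul [NonUnitalNonAssocSemiring R] (c d : R) (M : Matrix (Fin k) (Fin l) R)
    (N : Matrix (Fin l) (Fin p) R) : corner c M * corner d N = corner (c * d) (M * N) := by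
  ext i j
  cases i using Fin.cases <;> cases j using Fin.cases <;> simp [mul_apply, Fin.sum_univ_succ]

lemma corner_conjTranspose [AddMonoid R] [StarAddMonoid R] (c : R)
    (M : Matrix (Fin k) (Fin l) R) : (corner c M)ᴴ = corner (star c) Mᴴ := by
  ext i j
  cases i using Fin.cases <;> cases j using Fin.cases <;> simp

lemma corner_one [NonAssocSemiring R] : corner (1 : R) (1 : Matrix (Fin k) (Fin k) R) = 1 := by
  ext i j
  cases i using Fin.cases <;> cases j using Fin.cases <;>
    simp [one_apply, Fin.succ_ne_zero, (Fin.succ_ne_zero _).symm]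

lemma corner_one_mem_unitary [Semiring R] [StarRing R] {U : Matrix (Fin k) (Fin k) R}
    (hU : U ∈ unitary (Matrix (Fin k) (Fin k) R)) : corner 1 U ∈ unitary _ := by
  rw [Unitary.mem_iff, star_eq_conjTranspose, corner_conjTranspose, corner_mul, corner_mul,
    ← star_eq_conjTranspose, Unitary.star_mul_self_of_mem hU, Unitary.mul_star_self_of_mem hU]
  simp [corner_one]

section Unitary

variable [Semiring R] [StarRing R] {ι κ ι' κ' : Type*} [Fintype ι] [Fintype κ]

lemma conjTranspose_mul_mul_apply (U : Matrix ι ι' R) (A : Matrix ι κ R) (V : Matrix κ κ' R)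
    (i : ι') (j : κ') : (Uᴴ * A * V) i j = star (U.col i) ⬝ᵥ A *ᵥ V.col j := by
  simp only [mul_apply, mulVec, dotProduct, col_apply, conjTranspose_apply, Pi.star_apply,
    Finset.sum_mul, Finset.mul_sum, mul_assoc]
  exact Finset.sum_comm

variable [DecidableEq ι] [DecidableEq κ]

lemma star_col_dotProduct_col {U : Matrix ι ι R} (hU : U ∈ unitary (Matrix ι ι R)) (i j : ι) :
    star (U.col i) ⬝ᵥ U.col j = (1 : Matrix ι ι R) i j := by
  rw [← Unitary.star_mul_self_of_mem hU, star_eq_conjTranspose, mul_apply']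
  rfl

lemma eq_mul_conjTranspose_mul_mul {U : Matrix ι ι R} {V : Matrix κ κ R}
    (hU : U ∈ unitary (Matrix ι ι R)) (hV : V ∈ unitary (Matrix κ κ R)) (A : Matrix ι κ R) :
    A = U * (Uᴴ * A * V) * Vᴴ := by
  have hU' : U * Uᴴ = 1 := Unitary.mul_star_self_of_mem hU
  have hV' : V * Vᴴ = 1 := Unitary.mul_star_self_of_mem hV
  rw [← Matrix.mul_assoc, ← Matrix.mul_assoc, hU', Matrix.one_mul, Matrix.mul_assoc, hV',
    Matrix.mul_one]

lemma diagonal_const_mem_unitary {c : R} (hc : c ∈ unitary R) :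
    diagonal (fun _ : ι => c) ∈ unitary (Matrix ι ι R) := by
  rw [Unitary.mem_iff, star_eq_conjTranspose, diagonal_conjTranspose, diagonal_mul_diagonal,
    diagonal_mul_diagonal]
  simp [Unitary.star_mul_self_of_mem hc, Unitary.mul_star_self_of_mem hc]

end Unitary

end Matrix

namespace Quaternion

lemma eq_zero_of_forall_re_mul_eq_zero {q : ℍ[ℝ]} (h : ∀ c, (q * c).re = 0) : q = 0 := by
  simpa [self_mul_star] using h (star q)

lemma exists_mem_unitary_mul_eq_norm (a : ℍ[ℝ]) :
    ∃ φ ∈ unitary ℍ[ℝ], a * φ = (‖a‖ : ℍ[ℝ]) := by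
  rcases eq_or_ne a 0 with rfl | ha
  · exact ⟨1, one_mem _, by simp⟩
  have hn : ‖a‖ ≠ 0 := norm_ne_zero_iff.2 ha
  have hmul : a * (‖a‖⁻¹ • star a) = (‖a‖ : ℍ[ℝ]) := by
    rw [mul_smul_comm, self_mul_star, normSq_eq_norm_mul_self, smul_coe, inv_mul_cancel_left₀ hn]
  have hnormSq : normSq (‖a‖⁻¹ • star a) = 1 := by
    rw [normSq_smul, normSq_star, normSq_eq_norm_mul_self, inv_pow, ← sq,
      inv_mul_cancel₀ (pow_ne_zero 2 hn)]
  refine ⟨‖a‖⁻¹ • star a, Unitary.mem_iff.2 ⟨?_, ?_⟩, hmul⟩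
  · rw [star_mul_self, hnormSq, coe_one]
  · rw [self_mul_star, hnormSq, coe_one]

end Quaternion

lemma eq_zero_of_forall_mul_add_sq_mul_nonpos {a b : ℝ} (h : ∀ t, t * b + t ^ 2 * a ≤ 0) :
    b = 0 := by
  set s := b / (|a| + 1) with hs
  have hb : s * (|a| + 1) = b := by rw [hs]; field_simp
  have hs₂ : s ^ 2 ≤ s * b + s ^ 2 * a := by
    rw [← hb]
    nlinarith [mul_nonneg (sq_nonneg s) (neg_le_iff_add_nonneg.1 (neg_abs_le a))]
  have hs₀ : s = 0 := by nlinarith [h s, sq_nonneg s]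
  rw [← hb, hs₀, zero_mul]

namespace QuaternionSVD

variable {ι κ : Type*} [Fintype ι] [Fintype κ]

def vecNormSq (x : ι → ℍ[ℝ]) : ℝ := ∑ i, normSq (x i)

lemma star_dotProduct_self (x : ι → ℍ[ℝ]) : star x ⬝ᵥ x = (vecNormSq x : ℍ[ℝ]) := by
  rw [vecNormSq, ← algebraMap_def, map_sum]
  simp [dotProduct, star_mul_self]

lemma vecNormSq_nonneg (x : ι → ℍ[ℝ]) : 0 ≤ vecNormSq x :=
  Finset.sum_nonneg fun _ _ => normSq_nonneg

lemma normSq_le_vecNormSq (x : ι → ℍ[ℝ]) (i : ι) : normSq (x i) ≤ vecNormSq x :=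
  Finset.single_le_sum (f := fun i => normSq (x i)) (fun _ _ => normSq_nonneg) (Finset.mem_univ i)

@[simp] lemma vecNormSq_eq_zero {x : ι → ℍ[ℝ]} : vecNormSq x = 0 ↔ x = 0 := by
  simp [vecNormSq, Finset.sum_eq_zero_iff_of_nonneg, funext_iff]

@[simp] lemma vecNormSq_zero : vecNormSq (0 : ι → ℍ[ℝ]) = 0 := vecNormSq_eq_zero.2 rfl

lemma vecNormSq_smul (r : ℝ) (x : ι → ℍ[ℝ]) : vecNormSq (r • x) = r ^ 2 * vecNormSq x := by
  simp [vecNormSq, normSq_smul, Finset.mul_sum]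

lemma vecNormSq_add (x y : ι → ℍ[ℝ]) :
    vecNormSq (x + y) = vecNormSq x + vecNormSq y + 2 * (star x ⬝ᵥ y).re := by
  have h := congr_arg (fun q : ℍ[ℝ] => q.re) (star_dotProduct_self (x + y))
  have hyx : (star y ⬝ᵥ x).re = (star x ⬝ᵥ y).re := by
    rw [← re_star, star_dotProduct, star_star]
  simp only [star_add, add_dotProduct, dotProduct_add, star_dotProduct_self, re_add, re_coe,
    hyx] at h
  linarith

@[simp] lemma vecNormSq_single [DecidableEq ι] (i : ι) (q : ℍ[ℝ]) :
    vecNormSq (Pi.single i q) = normSq q := by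
  rw [vecNormSq, Finset.sum_eq_single i (fun j _ hj => by simp [hj]) (by simp)]
  simp

lemma continuous_vecNormSq : Continuous (vecNormSq : (ι → ℍ[ℝ]) → ℝ) :=
  continuous_finsetSum _ fun i _ => continuous_normSq.comp (continuous_apply i)

lemma isCompact_vecNormSq_eq_one : IsCompact {x : ι → ℍ[ℝ] | vecNormSq x = 1} := by
  refine (isCompact_univ_pi fun _ => isCompact_closedBall (0 : ℍ[ℝ]) 1).of_isClosed_subset
    (isClosed_eq continuous_vecNormSq continuous_const) fun x hx i _ => ?_
  have : ‖x i‖ * ‖x i‖ ≤ 1 := by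
    rw [← normSq_eq_norm_mul_self, ← hx.out]
    exact normSq_le_vecNormSq x i
  rw [Metric.mem_closedBall, dist_zero_right]
  nlinarith [norm_nonneg (x i)]

lemma exists_isMaxOn_vecNormSq_mulVec [Nonempty ι] (A : Matrix κ ι ℍ[ℝ]) :
    ∃ v, vecNormSq v = 1 ∧ IsMaxOn (fun x => vecNormSq (A *ᵥ x)) {x | vecNormSq x = 1} v := by
  classical
  obtain ⟨i⟩ := ‹Nonempty ι›
  exact isCompact_vecNormSq_eq_one.exists_isMaxOn ⟨Pi.single i 1, by simp⟩
    (continuous_vecNormSq.comp (continuous_const.matrix_mulVec continuous_id)).continuousOn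

section IsMaxOn

variable {A : Matrix κ ι ℍ[ℝ]} {v : ι → ℍ[ℝ]}

lemma vecNormSq_mulVec_le_of_isMaxOn
    (hmax : IsMaxOn (fun x => vecNormSq (A *ᵥ x)) {x | vecNormSq x = 1} v) (x : ι → ℍ[ℝ]) :
    vecNormSq (A *ᵥ x) ≤ vecNormSq (A *ᵥ v) * vecNormSq x := by
  rcases eq_or_ne x 0 with rfl | hx
  · simp
  have hpos : 0 < vecNormSq x := (vecNormSq_nonneg x).lt_of_ne' (vecNormSq_eq_zero.not.2 hx)
  set r := (√(vecNormSq x))⁻¹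
  have hr : r ^ 2 * vecNormSq x = 1 := by simp [r, inv_pow, Real.sq_sqrt hpos.le, hpos.ne']
  have hrx : r ^ 2 * vecNormSq (A *ᵥ x) ≤ vecNormSq (A *ᵥ v) := by
    simpa [mulVec_smul, vecNormSq_smul] using hmax (show vecNormSq (r • x) = 1 by
      rw [vecNormSq_smul, hr])
  calc vecNormSq (A *ᵥ x) = r ^ 2 * vecNormSq (A *ᵥ x) * vecNormSq x := by
        rw [mul_right_comm, hr, one_mul]
    _ ≤ vecNormSq (A *ᵥ v) * vecNormSq x := mul_le_mul_of_nonneg_right hrx (vecNormSq_nonneg x)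

lemma star_mulVec_dotProduct_mulVec_eq_zero_of_isMaxOn
    (hmax : IsMaxOn (fun x => vecNormSq (A *ᵥ x)) {x | vecNormSq x = 1} v)
    (hv : vecNormSq v = 1) {w : ι → ℍ[ℝ]} (hw : star v ⬝ᵥ w = 0) :
    star (A *ᵥ v) ⬝ᵥ A *ᵥ w = 0 := by
  refine Quaternion.eq_zero_of_forall_re_mul_eq_zero fun c => ?_
  set w' := MulOpposite.op c • w
  have hw' : star v ⬝ᵥ w' = 0 := by simp [w', dotProduct_smul, hw]
  have key : ∀ t : ℝ, t * (2 * (star (A *ᵥ v) ⬝ᵥ A *ᵥ w').re) +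
      t ^ 2 * (vecNormSq (A *ᵥ w') - vecNormSq (A *ᵥ v) * vecNormSq w') ≤ 0 := by
    intro t
    have h := vecNormSq_mulVec_le_of_isMaxOn hmax (v + t • w')
    rw [mulVec_add, mulVec_smul, vecNormSq_add, vecNormSq_add, vecNormSq_smul, vecNormSq_smul,
      dotProduct_smul, dotProduct_smul, hw', hv] at h
    simp only [smul_zero, re_zero, re_smul, smul_eq_mul] at h
    nlinarith
  simpa [w', mulVec_smul, dotProduct_smul] using eq_zero_of_forall_mul_add_sq_mul_nonpos key

lemma eq_zero_of_isMaxOn_of_mulVec_eq_zero [DecidableEq ι]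
    (hmax : IsMaxOn (fun x => vecNormSq (A *ᵥ x)) {x | vecNormSq x = 1} v) (hAv : A *ᵥ v = 0) :
    A = 0 := by
  refine ext_of_mulVec_single fun j => ?_
  have h := vecNormSq_mulVec_le_of_isMaxOn hmax (Pi.single j 1)
  rw [hAv, vecNormSq_zero, zero_mul] at h
  rw [zero_mulVec]
  exact vecNormSq_eq_zero.1 (le_antisymm h (vecNormSq_nonneg _))

end IsMaxOn

lemma vecMulVec_star_mul_self (u : ι → ℍ[ℝ]) :
    vecMulVec u (star u) * vecMulVec u (star u) = vecNormSq u • vecMulVec u (star u) := by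
  have h : ((vecNormSq u : ℝ) : ℍ[ℝ]) • star u = vecNormSq u • star u :=
    funext fun _ => coe_mul_eq_smul _ _
  rw [vecMulVec_mul_vecMulVec, star_dotProduct_self, h, vecMulVec_smul]

section Householder

variable [DecidableEq ι]

/-- The junk value `2 / 0 = 0` makes `householder 0 = 1`. -/
noncomputable def householder (u : ι → ℍ[ℝ]) : Matrix ι ι ℍ[ℝ] :=
  1 - (2 / vecNormSq u) • vecMulVec u (star u)

lemma householder_conjTranspose (u : ι → ℍ[ℝ]) : (householder u)ᴴ = householder u := by
  have h : ((2 / vecNormSq u) • vecMulVec u (star u))ᴴ =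
      (2 / vecNormSq u) • vecMulVec u (star u) :=
    Matrix.ext fun i j => by simp [vecMulVec_apply, Quaternion.star_smul]
  rw [householder, conjTranspose_sub, conjTranspose_one, h]

lemma householder_mul_self (u : ι → ℍ[ℝ]) : householder u * householder u = 1 := by
  rcases eq_or_ne u 0 with rfl | hu
  · simp [householder]
  have hN : vecNormSq u ≠ 0 := vecNormSq_eq_zero.not.2 hu
  simp only [householder, sub_mul, mul_sub, Matrix.one_mul, Matrix.mul_one, smul_mul_smul_comm,
    vecMulVec_star_mul_self, smul_smul]
  rw [show 2 / vecNormSq u * (2 / vecNormSq u) * vecNormSq u = 2 / vecNormSq u + 2 / vecNormSq u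
    by field_simp; ring, add_smul]
  abel

lemma householder_mem_unitary (u : ι → ℍ[ℝ]) : householder u ∈ unitary (Matrix ι ι ℍ[ℝ]) := by
  rw [Unitary.mem_iff, star_eq_conjTranspose, householder_conjTranspose, and_self,
    householder_mul_self]

lemma householder_sub_mulVec {x y : ι → ℍ[ℝ]} {r : ℝ} (hxy : vecNormSq x = vecNormSq y)
    (hyx : star y ⬝ᵥ x = r) : householder (x - y) *ᵥ x = y := by
  have hux : star (x - y) ⬝ᵥ x = ((vecNormSq x - r : ℝ) : ℍ[ℝ]) := by
    rw [star_sub, sub_dotProduct, star_dotProduct_self, hyx, coe_sub]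
  have huy : star (x - y) ⬝ᵥ y = ((r - vecNormSq x : ℝ) : ℍ[ℝ]) := by
    have hxy' : star x ⬝ᵥ y = star (star y ⬝ᵥ x) := by rw [star_dotProduct]
    rw [star_sub, sub_dotProduct, star_dotProduct_self, ← hxy, hxy', hyx, star_coe, coe_sub]
  have hN : vecNormSq (x - y) = 2 * (vecNormSq x - r) := by
    apply coe_injective
    rw [← star_dotProduct_self, dotProduct_sub, hux, huy, ← coe_sub]
    ring_nf
  rcases eq_or_ne (vecNormSq x - r) 0 with h0 | h0
  · have : x - y = 0 := by rw [← vecNormSq_eq_zero, hN, h0, mul_zero]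
    simp [householder, sub_eq_zero.1 this]
  have hux' : MulOpposite.op (star (x - y) ⬝ᵥ x) • (x - y) = (vecNormSq x - r) • (x - y) := by
    rw [hux]; exact funext fun _ => (coe_commutes _ _).symm.trans (coe_mul_eq_smul _ _)
  rw [householder, sub_mulVec, one_mulVec, smul_mulVec, vecMulVec_mulVec, hux', smul_smul, hN,
    div_mul_eq_mul_div, div_self (mul_ne_zero two_ne_zero h0), one_smul, sub_sub_cancel]

lemma exists_mem_unitary_col_eq (i₀ : ι) {v : ι → ℍ[ℝ]} (hv : vecNormSq v = 1) :
    ∃ W ∈ unitary (Matrix ι ι ℍ[ℝ]), W.col i₀ = v := by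
  -- `ψ` makes `star v ⬝ᵥ Pi.single i₀ ψ` real, so a reflection maps `Pi.single i₀ ψ` to `v`.
  obtain ⟨ψ, hψ, hψv⟩ := Quaternion.exists_mem_unitary_mul_eq_norm (star (v i₀))
  have hψ₁ : normSq ψ = 1 := by
    simpa [star_mul_self] using congr_arg (fun q : ℍ[ℝ] => q.re) (Unitary.star_mul_self_of_mem hψ)
  have hH : householder (Pi.single i₀ ψ - v) *ᵥ Pi.single i₀ ψ = v :=
    householder_sub_mulVec (by rw [vecNormSq_single, hψ₁, hv])
      (by rw [dotProduct_single]; exact hψv)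
  refine ⟨householder (Pi.single i₀ ψ - v) * diagonal (fun _ => ψ),
    mul_mem (householder_mem_unitary _) (diagonal_const_mem_unitary hψ), .trans ?_ hH⟩
  ext i : 1
  rw [mulVec_single]
  simp [mul_diagonal]

end Householder

lemma exists_mem_unitary_eq_mul_corner_mul {n m : ℕ}
    (A : Matrix (Fin (n + 1)) (Fin (m + 1)) ℍ[ℝ]) :
    ∃ U ∈ unitary (Matrix (Fin (n + 1)) (Fin (n + 1)) ℍ[ℝ]),
      ∃ V ∈ unitary (Matrix (Fin (m + 1)) (Fin (m + 1)) ℍ[ℝ]),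
      ∃ σ : ℝ, 0 ≤ σ ∧ ∃ B : Matrix (Fin n) (Fin m) ℍ[ℝ], A = U * corner (σ : ℍ[ℝ]) B * Vᴴ := by
  obtain ⟨v, hv, hmax⟩ := exists_isMaxOn_vecNormSq_mulVec A
  by_cases hAv : A *ᵥ v = 0
  · refine ⟨1, one_mem _, 1, one_mem _, 0, le_rfl, 0, ?_⟩
    simp [eq_zero_of_isMaxOn_of_mulVec_eq_zero hmax hAv, corner_zero]
  set σ := √(vecNormSq (A *ᵥ v))
  have hσ : 0 < σ :=
    Real.sqrt_pos.2 ((vecNormSq_nonneg _).lt_of_ne' (vecNormSq_eq_zero.not.2 hAv))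
  obtain ⟨U, hU, hUcol⟩ := exists_mem_unitary_col_eq 0 (v := σ⁻¹ • A *ᵥ v) (by
    rw [vecNormSq_smul, inv_pow, Real.sq_sqrt (vecNormSq_nonneg _), inv_mul_cancel₀]
    exact vecNormSq_eq_zero.not.2 hAv)
  obtain ⟨V, hV, hVcol⟩ := exists_mem_unitary_col_eq 0 hv
  have hAV : A *ᵥ V.col 0 = σ • U.col 0 := by
    rw [hVcol, hUcol, smul_smul, mul_inv_cancel₀ hσ.ne', one_smul]
  have hcol (i) : (Uᴴ * A * V) i 0 = σ • (1 : Matrix (Fin (n + 1)) (Fin (n + 1)) ℍ[ℝ]) i 0 := by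
    rw [conjTranspose_mul_mul_apply, hAV, dotProduct_smul, star_col_dotProduct_col hU]
  have hrow (j : Fin m) : (Uᴴ * A * V) 0 j.succ = 0 := by
    have hvj : star v ⬝ᵥ V.col j.succ = 0 := by
      rw [← hVcol, star_col_dotProduct_col hV, one_apply_ne (Fin.succ_ne_zero j).symm]
    have h := star_mulVec_dotProduct_mulVec_eq_zero_of_isMaxOn hmax hv hvj
    rw [← hVcol, hAV, show star (σ • U.col 0) = σ • star (U.col 0) from
      funext fun _ => Quaternion.star_smul _ _, smul_dotProduct, ← conjTranspose_mul_mul_apply] at h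
    exact (smul_eq_zero.1 h).resolve_left hσ.ne'
  refine ⟨U, hU, V, hV, σ, hσ.le, (Uᴴ * A * V).submatrix Fin.succ Fin.succ, ?_⟩
  rw [← eq_corner (by rw [hcol, one_apply_eq, ← coe_one, smul_coe, mul_one])
    (fun i => by rw [hcol, one_apply_ne (Fin.succ_ne_zero i), smul_zero]) hrow]
  exact eq_mul_conjTranspose_mul_mul hU hV A

def IsNonnegDiagonal {n m : ℕ} (D : Matrix (Fin n) (Fin m) ℍ[ℝ]) : Prop :=
  (∀ (i : Fin n) (j : Fin m), (i : ℕ) ≠ j → D i j = 0) ∧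
    ∀ (i : Fin n) (j : Fin m), (i : ℕ) = j → ∃ r : ℝ, 0 ≤ r ∧ D i j = r

lemma IsNonnegDiagonal.corner {n m : ℕ} {D : Matrix (Fin n) (Fin m) ℍ[ℝ]}
    (hD : IsNonnegDiagonal D) {σ : ℝ} (hσ : 0 ≤ σ) :
    IsNonnegDiagonal (corner (σ : ℍ[ℝ]) D) := by
  constructor
  · intro i j hij
    cases i using Fin.cases <;> cases j using Fin.cases
    · exact absurd rfl hij
    · rfl
    · rfl
    · exact hD.1 _ _ (by simpa using hij)
  · intro i j hij
    cases i using Fin.cases <;> cases j using Fin.cases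
    · exact ⟨σ, hσ, rfl⟩
    · simp at hij
    · simp at hij
    · exact hD.2 _ _ (by simpa using hij)

theorem exists_mem_unitary_isNonnegDiagonal (n m : ℕ) (A : Matrix (Fin n) (Fin m) ℍ[ℝ]) :
    ∃ U ∈ unitary (Matrix (Fin n) (Fin n) ℍ[ℝ]), ∃ V ∈ unitary (Matrix (Fin m) (Fin m) ℍ[ℝ]),
      ∃ D : Matrix (Fin n) (Fin m) ℍ[ℝ], IsNonnegDiagonal D ∧ A = U * D * Vᴴ := by
  induction n generalizing m with
  | zero => exact ⟨1, one_mem _, 1, one_mem _, A, ⟨fun i => i.elim0, fun i => i.elim0⟩, by simp⟩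
  | succ n ih =>
    cases m with
    | zero =>
      exact ⟨1, one_mem _, 1, one_mem _, A, ⟨fun _ j => j.elim0, fun _ j => j.elim0⟩, by simp⟩
    | succ m =>
      obtain ⟨U, hU, V, hV, σ, hσ, B, rfl⟩ := exists_mem_unitary_eq_mul_corner_mul A
      obtain ⟨U', hU', V', hV', D, hD, hB⟩ := ih m B
      refine ⟨U * corner 1 U', mul_mem hU (corner_one_mem_unitary hU'), V * corner 1 V',
        mul_mem hV (corner_one_mem_unitary hV'), corner (σ : ℍ[ℝ]) D, hD.corner hσ, ?_⟩
      have hcorner :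
          corner (σ : ℍ[ℝ]) B = corner 1 U' * corner (σ : ℍ[ℝ]) D * (corner 1 V')ᴴ := by
        rw [hB, corner_conjTranspose, corner_mul, corner_mul, star_one, one_mul, mul_one]
      simp only [hcorner, conjTranspose_mul, Matrix.mul_assoc]

end QuaternionSVD

/-- Quaternionic SVD: every `n × m` matrix over the real quaternions factors as
`A = U * Σ * V*` with `U ∈ Sp(n)`, `V ∈ Sp(m)` and `Σ` rectangular-diagonal with
diagonal entries that are (coercions of) nonnegative reals. -/
theorem quaternion_svd (n m : ℕ) (A : Matrix (Fin n) (Fin m) ℍ[ℝ]) :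
    ∃ (U : Matrix (Fin n) (Fin n) ℍ[ℝ]) (V : Matrix (Fin m) (Fin m) ℍ[ℝ])
      (D : Matrix (Fin n) (Fin m) ℍ[ℝ]),
      Uᴴ * U = 1 ∧ Vᴴ * V = 1 ∧ A = U * D * Vᴴ ∧
      (∀ (i : Fin n) (j : Fin m), (i : ℕ) ≠ (j : ℕ) → D i j = 0) ∧
      (∀ (i : Fin n) (j : Fin m), (i : ℕ) = (j : ℕ) →
        ∃ r : ℝ, 0 ≤ r ∧ D i j = (r : ℍ[ℝ])) := by
  obtain ⟨U, hU, V, hV, D, ⟨hoff, hdiag⟩, hA⟩ :=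
    QuaternionSVD.exists_mem_unitary_isNonnegDiagonal n m A
  exact ⟨U, V, D, Unitary.star_mul_self_of_mem hU, Unitary.star_mul_self_of_mem hV, hA, hoff, hdiag⟩
end

section
/- For every n×n matrix A over the real quaternions ℍ there exist quaternionic n×n matrices P and S with P* = P and S* = S such that P = B* * B for some quaternionic matrix B and S = C* * C for some quaternionic matrix C, and a matrix W in the compact symplectic group Sp(n) (W*W = I), such that A = W * P and A = S * W. -/
/-!
Through the regular representation `ℍ[ℝ] → Matrix (Fin 4) (Fin 4) ℝ`, quaternionic matrices
become a star-subalgebra `S` of real matrices, so it suffices to write each `M ∈ S` as `M = W P`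
with `W` orthogonal, `P` positive semidefinite and both in `S`. If `M` is invertible, take
`P = √(Mᴴ M)` and `W = M P⁻¹`: square roots and inverses of Hermitian matrices are given by the
continuous functional calculus, so they stay in every star-subalgebra, all of which are closed in
finite dimension. A general `M` is the limit of the invertible `M + t` as `t → 0`; the orthogonal
factors accumulate at some `W ∈ S` by compactness of the orthogonal group, and `Wᴴ M` is then
positive semidefinite as a limit of positive semidefinite matrices. The left decomposition is
`A = (W P Wᴴ) W`.
-/

open Filter Matrix Quaternion
open scoped MatrixOrder ComplexOrder Topology

theorem StarAlgHom.mem_range {R A B : Type*} [CommSemiring R] [StarRing R] [Semiring A]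
    [Algebra R A] [StarRing A] [Semiring B] [Algebra R B] [StarRing B] [StarModule R B]
    (φ : A →⋆ₐ[R] B) {y : B} : y ∈ φ.range ↔ ∃ x, φ x = y :=
  Iff.rfl

namespace Matrix

variable {𝕜 n : Type*} [RCLike 𝕜] [Fintype n]

theorem isClosed_setOf_posSemidef : IsClosed {A : Matrix n n 𝕜 | A.PosSemidef} := by
  simp only [posSemidef_iff_dotProduct_mulVec, Set.ofPred_and, Set.ofPred_forall]
  exact (isClosed_eq (by fun_prop) (by fun_prop)).inter <|
    isClosed_iInter fun x ↦ isClosed_le continuous_const (by fun_prop)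

variable [DecidableEq n]

theorem isCompact_unitaryGroup : IsCompact (unitaryGroup n 𝕜 : Set (Matrix n n 𝕜)) := by
  refine (isCompact_univ_pi fun _ ↦ isCompact_univ_pi fun _ ↦ isCompact_closedBall (0 : 𝕜) 1)
    |>.of_isClosed_subset (isClosed_unitary (R := Matrix n n 𝕜)) fun U hU ↦ ?_
  simpa [Set.mem_univ_pi] using entry_norm_bound_of_unitary hU

theorem eventually_isUnit_add_algebraMap (M : Matrix n n 𝕜) :
    ∀ᶠ t in 𝓝[≠] (0 : ℝ), IsUnit (M + algebraMap ℝ (Matrix n n 𝕜) t) := by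
  filter_upwards [nhdsNE_le_cofinite 0 M.finite_real_spectrum.neg.eventually_cofinite_notMem]
    with t ht
  rw [Set.mem_neg, spectrum.mem_iff, not_not] at ht
  simpa using ht.neg

instance isClosed_starSubalgebra (S : StarSubalgebra ℝ (Matrix n n 𝕜)) :
    IsClosed (S : Set (Matrix n n 𝕜)) :=
  S.toSubalgebra.toSubmodule.closed_of_finiteDimensional

theorem sqrt_mem (S : StarSubalgebra ℝ (Matrix n n 𝕜)) {P : Matrix n n 𝕜} (hP : 0 ≤ P)
    (hPS : P ∈ S) : CFC.sqrt P ∈ S := by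
  rw [CFC.sqrt_eq_real_sqrt P hP]
  exact cfcₙ_mem Real.sqrt hPS

theorem inv_mem_of_isHermitian (S : StarSubalgebra ℝ (Matrix n n 𝕜)) {P : Matrix n n 𝕜}
    (hP : P.IsHermitian) (hPS : P ∈ S) : P⁻¹ ∈ S := by
  rw [nonsing_inv_eq_ringInverse]
  by_cases hu : IsUnit P
  · rw [← cfc_ringInverse_id (R := ℝ) P hu hP]
    exact cfc_mem _ hPS
  · rw [Ring.inverse_non_unit P hu]
    exact zero_mem S

theorem exists_mem_unitaryGroup_posSemidef_conjTranspose_mul_of_isUnit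
    (S : StarSubalgebra ℝ (Matrix n n 𝕜)) {M : Matrix n n 𝕜} (hMS : M ∈ S) (hM : IsUnit M) :
    ∃ W ∈ S, W ∈ unitaryGroup n 𝕜 ∧ (Wᴴ * M).PosSemidef := by
  have hMM : 0 ≤ Mᴴ * M := (posSemidef_conjTranspose_mul_self M).nonneg
  set P := CFC.sqrt (Mᴴ * M)
  have hPP : P * P = Mᴴ * M := CFC.sqrt_mul_sqrt_self _ hMM
  have hPH : Pᴴ = P := (CFC.sqrt_nonneg _).isSelfAdjoint
  have hPS : P ∈ S := sqrt_mem S hMM (mul_mem (star_mem hMS) hMS)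
  have hP : IsUnit P.det := (isUnit_iff_isUnit_det P).mp <|
    isUnit_of_mul_isUnit_left (hPP ▸ hM.star.mul hM)
  have hPinvH : (P⁻¹)ᴴ = P⁻¹ := by rw [conjTranspose_nonsing_inv, hPH]
  refine ⟨M * P⁻¹, mul_mem hMS (inv_mem_of_isHermitian S hPH hPS), ?_, ?_⟩
  · rw [mem_unitaryGroup_iff', star_eq_conjTranspose, conjTranspose_mul, hPinvH]
    calc P⁻¹ * Mᴴ * (M * P⁻¹) = P⁻¹ * (P * P) * P⁻¹ := by simp only [hPP, Matrix.mul_assoc]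
      _ = 1 := by
        rw [← Matrix.mul_assoc, nonsing_inv_mul _ hP, Matrix.one_mul, mul_nonsing_inv _ hP]
  · rw [conjTranspose_mul, hPinvH, Matrix.mul_assoc, ← hPP, ← Matrix.mul_assoc,
      nonsing_inv_mul _ hP, Matrix.one_mul]
    exact (CFC.sqrt_nonneg _).posSemidef

theorem exists_mem_unitaryGroup_posSemidef_conjTranspose_mul
    (S : StarSubalgebra ℝ (Matrix n n 𝕜)) {M : Matrix n n 𝕜} (hMS : M ∈ S) :
    ∃ W ∈ S, W ∈ unitaryGroup n 𝕜 ∧ (Wᴴ * M).PosSemidef := by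
  let Mt : ℝ → Matrix n n 𝕜 := fun t ↦ M + algebraMap ℝ _ t
  choose! W hWS hWU hWP using fun t (ht : IsUnit (Mt t)) ↦
    exists_mem_unitaryGroup_posSemidef_conjTranspose_mul_of_isUnit S
      (add_mem hMS (S.algebraMap_mem t)) ht
  let 𝒰 := Ultrafilter.of (𝓝[≠] (0 : ℝ))
  have h𝒰 : ∀ᶠ t in (𝒰 : Filter ℝ), IsUnit (Mt t) :=
    Ultrafilter.of_le _ (eventually_isUnit_add_algebraMap M)
  obtain ⟨W₀, ⟨hW₀S, hW₀U⟩, hW₀⟩ :=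
    (isCompact_unitaryGroup.inter_left (isClosed_starSubalgebra S)).ultrafilter_le_nhds'
      (𝒰.map W) (h𝒰.mono fun t ht ↦ ⟨hWS t ht, hWU t ht⟩)
  rw [Ultrafilter.coe_map] at hW₀
  have hMt : Tendsto Mt 𝒰 (𝓝 M) := by
    have : Continuous Mt := by fun_prop
    simpa [Mt] using (this.tendsto 0).mono_left ((Ultrafilter.of_le _).trans nhdsWithin_le_nhds)
  exact ⟨W₀, hW₀S, hW₀U, isClosed_setOf_posSemidef.mem_of_tendsto
    ((Tendsto.star hW₀).mul hMt) (h𝒰.mono fun t ht ↦ hWP t ht)⟩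

end Matrix

theorem StarAlgHom.exists_mem_unitary_eq_mul_star_mul_self {𝕜 n R : Type*} [RCLike 𝕜]
    [Fintype n] [DecidableEq n] [Semiring R] [StarRing R] [Algebra ℝ R]
    (φ : R →⋆ₐ[ℝ] Matrix n n 𝕜) (hφ : Function.Injective φ) (a : R) :
    ∃ w ∈ unitary R, ∃ b : R, a = w * (star b * b) := by
  obtain ⟨_, hwS, hw, hwa⟩ :=
    exists_mem_unitaryGroup_posSemidef_conjTranspose_mul φ.range (φ.mem_range.2 ⟨a, rfl⟩)
  obtain ⟨w, rfl⟩ := φ.mem_range.1 hwS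
  obtain ⟨b, hb⟩ := φ.mem_range.1 <| sqrt_mem φ.range hwa.nonneg <|
    φ.mem_range.2 ⟨star w * a, by rw [map_mul, map_star, star_eq_conjTranspose]⟩
  have hw' : w ∈ unitary R := by
    rw [Unitary.mem_iff]
    constructor <;> apply hφ
    · rw [map_mul, map_star, map_one, Unitary.star_mul_self_of_mem hw]
    · rw [map_mul, map_star, map_one, Unitary.mul_star_self_of_mem hw]
  refine ⟨w, hw', b, hφ ?_⟩
  have hbH : star (φ b) = φ b := by rw [hb]; exact (CFC.sqrt_nonneg _).isSelfAdjoint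
  rw [map_mul, map_mul, map_star, hbH, hb, CFC.sqrt_mul_sqrt_self _ hwa.nonneg, ← Matrix.mul_assoc,
    ← star_eq_conjTranspose, Unitary.mul_star_self_of_mem hw, Matrix.one_mul]

namespace Quaternion

noncomputable def basisOneIJK : Module.Basis (Fin 4) ℝ ℍ[ℝ] :=
  QuaternionAlgebra.basisOneIJK (-1) 0 (-1)

theorem coe_basisOneIJK (j : Fin 4) :
    basisOneIJK j = (Quaternion.equivTuple ℝ).symm (Pi.single j 1) :=
  congrFun (Module.Basis.coe_ofEquivFun (QuaternionAlgebra.linearEquivTuple (-1 : ℝ) 0 (-1))) j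

theorem basisOneIJK_repr (q : ℍ[ℝ]) : ⇑(basisOneIJK.repr q) = Quaternion.equivTuple ℝ q := rfl

noncomputable def leftMulMatrix : ℍ[ℝ] →ₐ[ℝ] Matrix (Fin 4) (Fin 4) ℝ :=
  Algebra.leftMulMatrix basisOneIJK

theorem leftMulMatrix_star (q : ℍ[ℝ]) : leftMulMatrix (star q) = (leftMulMatrix q)ᴴ := by
  ext i j
  rw [conjTranspose_eq_transpose_of_trivial, transpose_apply, leftMulMatrix,
    Algebra.leftMulMatrix_eq_repr_mul, Algebra.leftMulMatrix_eq_repr_mul, basisOneIJK_repr,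
    basisOneIJK_repr, coe_basisOneIJK, coe_basisOneIJK]
  simp only [equivTuple_apply, re_mul, imI_mul, imJ_mul, imK_mul]
  fin_cases i <;> fin_cases j <;> simp

noncomputable def matrixRealRepr (n : Type*) [Fintype n] [DecidableEq n] :
    Matrix n n ℍ[ℝ] →⋆ₐ[ℝ] Matrix (n × Fin 4) (n × Fin 4) ℝ where
  toAlgHom := (compAlgEquiv n (Fin 4) ℝ ℝ).toAlgHom.comp leftMulMatrix.mapMatrix
  map_star' A := by
    ext ⟨i, a⟩ ⟨j, b⟩
    simp [leftMulMatrix_star]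

theorem matrixRealRepr_injective (n : Type*) [Fintype n] [DecidableEq n] :
    Function.Injective (matrixRealRepr n) :=
  (compAlgEquiv n (Fin 4) ℝ ℝ).injective.comp <|
    Matrix.map_injective (Algebra.leftMulMatrix_injective basisOneIJK)

end Quaternion

/-- Polar decomposition of a quaternionic square matrix: `A = W * P = S * W` with
`W ∈ Sp(n)` and `P`, `S` Hermitian and positive semidefinite (of the form `B* B`). -/
theorem quaternion_polar_decomposition (n : ℕ) (A : Matrix (Fin n) (Fin n) ℍ[ℝ]) :
    ∃ (P S W : Matrix (Fin n) (Fin n) ℍ[ℝ]),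
      Pᴴ = P ∧ (∃ B : Matrix (Fin n) (Fin n) ℍ[ℝ], P = Bᴴ * B) ∧
      Sᴴ = S ∧ (∃ C : Matrix (Fin n) (Fin n) ℍ[ℝ], S = Cᴴ * C) ∧
      Wᴴ * W = 1 ∧
      A = W * P ∧ A = S * W := by
  obtain ⟨W, hW, B, hA⟩ := (matrixRealRepr (Fin n)).exists_mem_unitary_eq_mul_star_mul_self
    (matrixRealRepr_injective (Fin n)) A
  have hWW : Wᴴ * W = 1 := Unitary.star_mul_self_of_mem hW
  refine ⟨Bᴴ * B, W * (Bᴴ * B) * Wᴴ, W, ?_, ⟨B, rfl⟩, ?_, ⟨B * Wᴴ, ?_⟩, hWW, hA, ?_⟩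
  · simp [conjTranspose_mul]
  · simp [conjTranspose_mul, Matrix.mul_assoc]
  · simp [conjTranspose_mul, Matrix.mul_assoc]
  · rw [Matrix.mul_assoc, hWW, Matrix.mul_one]
    exact hA
end

section
/- For every k, there exists an injective monoid homomorphism f from the quaternionic unitary group Sp(k) = {A : k×k matrix over ℍ | A*A = I} to the multiplicative monoid of complex 2k×2k matrices (indexed by Fin k ⊕ Fin k) whose range is exactly the set of complex matrices B satisfying both Bᴴ * B = I and Bᵀ * Ω * B = Ω, where Ω is the block matrix [[0, -I],[I, 0]]. In particular, Sp(k) is isomorphic as a group to the intersection of the complex unitary group U(2k) with the complex symplectic group {B | BᵀΩB = Ω}. -/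
open Matrix Quaternion

/-- The compact symplectic group `Sp(k)`: quaternionic `k × k` matrices with `A* A = 1`,
as a submonoid of the multiplicative monoid of matrices. -/
noncomputable def Sp (k : ℕ) : Submonoid (Matrix (Fin k) (Fin k) ℍ[ℝ]) where
  carrier := {A | Aᴴ * A = 1}
  one_mem' := by simp
  mul_mem' := by
    intro a b ha hb
    show (a * b)ᴴ * (a * b) = 1
    rw [Matrix.conjTranspose_mul, Matrix.mul_assoc, ← Matrix.mul_assoc aᴴ a b, ha,
      Matrix.one_mul, hb]

/-- The standard symplectic form `Ω = [[0, -I], [I, 0]]` on `ℂ^(2k)`. -/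
def Omega (k : ℕ) : Matrix (Fin k ⊕ Fin k) (Fin k ⊕ Fin k) ℂ :=
  Matrix.fromBlocks 0 (-1) 1 0

/-! Writing a quaternion as `z + w j` with `z, w ∈ ℂ` turns a quaternionic matrix `A = Z + W j`
into the complex matrix `[[Z, -W], [W̄, Z̄]]`. This map is injective, multiplicative and commutes
with `ᴴ`, so it carries `A* A = 1` to unitarity, and its image is exactly the set of `B` with
`Ω B = B̄ Ω`. For unitary `B` the conjugate `B̄` inverts `Bᵀ`, which makes `Ω B = B̄ Ω`
equivalent to `Bᵀ Ω B = Ω`. -/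

namespace Quaternion

open ComplexConjugate

/-- With `ℂ = ℝ + ℝ i ⊆ ℍ`, every quaternion is `q = zPart q + wPart q * j`. -/
def zPart : ℍ[ℝ] →+ ℂ where
  toFun q := ⟨q.re, q.imI⟩
  map_zero' := rfl
  map_add' _ _ := rfl

def wPart : ℍ[ℝ] →+ ℂ where
  toFun q := ⟨q.imJ, q.imK⟩
  map_zero' := rfl
  map_add' _ _ := rfl

@[simp]
theorem zPart_apply (q : ℍ[ℝ]) : zPart q = ⟨q.re, q.imI⟩ := rfl

@[simp]
theorem wPart_apply (q : ℍ[ℝ]) : wPart q = ⟨q.imJ, q.imK⟩ := rfl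

def ofComplexPair (z w : ℂ) : ℍ[ℝ] := ⟨z.re, z.im, w.re, w.im⟩

theorem ext_zPart_wPart {p q : ℍ[ℝ]} (hz : zPart p = zPart q) (hw : wPart p = wPart q) :
    p = q := by
  simp only [zPart_apply, wPart_apply, Complex.mk.injEq] at hz hw
  ext <;> tauto

theorem zPart_mul (p q : ℍ[ℝ]) :
    zPart (p * q) = zPart p * zPart q - wPart p * conj (wPart q) := by
  apply Complex.ext <;> simp <;> ring

theorem wPart_mul (p q : ℍ[ℝ]) :
    wPart (p * q) = zPart p * wPart q + wPart p * conj (zPart q) := by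
  apply Complex.ext <;> simp <;> ring

theorem zPart_star (q : ℍ[ℝ]) : zPart (star q) = conj (zPart q) := by
  apply Complex.ext <;> simp

theorem wPart_star (q : ℍ[ℝ]) : wPart (star q) = -wPart q := by
  apply Complex.ext <;> simp

end Quaternion

namespace Matrix

open ComplexConjugate

variable {n : Type*}

def quaternionBlock (Z W : Matrix n n ℂ) : Matrix (n ⊕ n) (n ⊕ n) ℂ :=
  fromBlocks Z (-W) (W.map conj) (Z.map conj)

theorem map_conj_map_conj (M : Matrix n n ℂ) : (M.map conj).map conj = M := by
  ext; simp

theorem quaternionBlock_mul [Fintype n] (Z W Z' W' : Matrix n n ℂ) :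
    quaternionBlock Z W * quaternionBlock Z' W' =
      quaternionBlock (Z * Z' - W * W'.map conj) (Z * W' + W * Z'.map conj) := by
  simp only [quaternionBlock, fromBlocks_multiply, fromBlocks_inj, Matrix.map_mul,
    Matrix.map_sub _ (map_sub conj), Matrix.map_add _ (map_add conj), map_conj_map_conj]
  exact ⟨by noncomm_ring, by noncomm_ring, add_comm _ _, by noncomm_ring⟩

theorem quaternionBlock_one [DecidableEq n] : quaternionBlock (1 : Matrix n n ℂ) 0 = 1 := by
  simp [quaternionBlock]

theorem conjTranspose_quaternionBlock (Z W : Matrix n n ℂ) :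
    (quaternionBlock Z W)ᴴ = quaternionBlock Zᴴ (-Wᵀ) := by
  ext (i | i) (j | j) <;> simp [quaternionBlock]

theorem quaternionBlock_injective : Function.Injective2 (quaternionBlock (n := n)) := by
  intro Z W Z' W' h
  simp only [quaternionBlock, fromBlocks_inj, neg_inj] at h
  exact ⟨h.1, h.2.1⟩

theorem J_mul_eq_map_star_mul_J_iff [Fintype n] [DecidableEq n]
    {B : Matrix (n ⊕ n) (n ⊕ n) ℂ} :
    J n ℂ * B = B.map star * J n ℂ ↔ ∃ Z W, quaternionBlock Z W = B := by
  obtain ⟨P, Q, R, S, rfl⟩ : ∃ P Q R S, B = fromBlocks P Q R S :=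
    ⟨_, _, _, _, (fromBlocks_toBlocks B).symm⟩
  simp only [J, quaternionBlock, fromBlocks_map, fromBlocks_multiply, fromBlocks_inj, zero_mul,
    neg_mul, one_mul, zero_add, add_zero, mul_zero, mul_one, mul_neg, neg_inj, RCLike.star_def,
    exists_and_left, exists_eq_left]
  constructor
  · rintro ⟨hR, hS, -, -⟩
    exact ⟨-Q, neg_neg Q, by rw [Matrix.map_neg _ (map_neg conj), ← hR, neg_neg], hS.symm⟩
  · rintro ⟨W, rfl, rfl, rfl⟩
    exact ⟨(Matrix.map_neg _ (map_neg conj) W).symm, rfl, (map_conj_map_conj P).symm,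
      by rw [map_conj_map_conj]⟩

theorem transpose_mul_mul_eq_iff_mul_eq_map_star_mul {R : Type*} [CommRing R] [StarRing R]
    [Fintype n] [DecidableEq n] {B : Matrix n n R} (hB : Bᴴ * B = 1) (Ω : Matrix n n R) :
    Bᵀ * Ω * B = Ω ↔ Ω * B = B.map star * Ω := by
  have hB' : Bᵀ * B.map star = 1 := by
    rw [← conjTranspose_transpose, ← transpose_mul, hB, transpose_one]
  have hB'' : B.map star * Bᵀ = 1 := mul_eq_one_comm.mp hB'
  constructor
  · intro h
    calc Ω * B = B.map star * (Bᵀ * Ω * B) := by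
          rw [← Matrix.mul_assoc, ← Matrix.mul_assoc, hB'', Matrix.one_mul]
      _ = B.map star * Ω := by rw [h]
  · intro h
    rw [Matrix.mul_assoc, h, ← Matrix.mul_assoc, hB', Matrix.one_mul]

open Quaternion

theorem map_zPart_mul [Fintype n] (A B : Matrix n n ℍ[ℝ]) :
    (A * B).map zPart = A.map zPart * B.map zPart - A.map wPart * (B.map wPart).map conj := by
  ext i j
  simp only [map_apply, mul_apply, sub_apply, map_sum, ← Finset.sum_sub_distrib, zPart_mul]

theorem map_wPart_mul [Fintype n] (A B : Matrix n n ℍ[ℝ]) :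
    (A * B).map wPart = A.map zPart * B.map wPart + A.map wPart * (B.map zPart).map conj := by
  ext i j
  simp only [map_apply, mul_apply, add_apply, map_sum, ← Finset.sum_add_distrib, wPart_mul]

theorem map_zPart_conjTranspose (A : Matrix n n ℍ[ℝ]) : Aᴴ.map zPart = (A.map zPart)ᴴ := by
  ext i j
  simp only [map_apply, conjTranspose_apply, zPart_star, RCLike.star_def]

theorem map_wPart_conjTranspose (A : Matrix n n ℍ[ℝ]) : Aᴴ.map wPart = -(A.map wPart)ᵀ := by
  ext i j
  simp only [map_apply, conjTranspose_apply, transpose_apply, neg_apply, wPart_star]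

def toComplex (A : Matrix n n ℍ[ℝ]) : Matrix (n ⊕ n) (n ⊕ n) ℂ :=
  quaternionBlock (A.map zPart) (A.map wPart)

theorem toComplex_one [DecidableEq n] : toComplex (1 : Matrix n n ℍ[ℝ]) = 1 := by
  have hz : (1 : Matrix n n ℍ[ℝ]).map zPart = 1 := Matrix.map_one _ (map_zero _) rfl
  have hw : (1 : Matrix n n ℍ[ℝ]).map wPart = 0 := by
    ext i j
    rw [map_apply, one_apply]
    split_ifs <;> rfl
  rw [toComplex, hz, hw, quaternionBlock_one]

theorem toComplex_mul [Fintype n] (A B : Matrix n n ℍ[ℝ]) :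
    toComplex (A * B) = toComplex A * toComplex B := by
  rw [toComplex, toComplex, toComplex, quaternionBlock_mul, map_zPart_mul, map_wPart_mul]

def toComplexHom [Fintype n] [DecidableEq n] :
    Matrix n n ℍ[ℝ] →* Matrix (n ⊕ n) (n ⊕ n) ℂ where
  toFun := toComplex
  map_one' := toComplex_one
  map_mul' := toComplex_mul

theorem toComplex_conjTranspose (A : Matrix n n ℍ[ℝ]) : toComplex Aᴴ = (toComplex A)ᴴ := by
  rw [toComplex, toComplex, conjTranspose_quaternionBlock, map_zPart_conjTranspose,
    map_wPart_conjTranspose]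

theorem toComplex_injective : Function.Injective (toComplex (n := n)) := by
  intro A B h
  obtain ⟨hz, hw⟩ := quaternionBlock_injective h
  ext1 i j
  exact ext_zPart_wPart (congrFun₂ hz i j) (congrFun₂ hw i j)

theorem range_toComplex [Fintype n] [DecidableEq n] :
    Set.range (toComplex (n := n)) = {B | J n ℂ * B = B.map star * J n ℂ} := by
  ext B
  rw [Set.mem_ofPred_eq, J_mul_eq_map_star_mul_J_iff]
  constructor
  · rintro ⟨A, rfl⟩
    exact ⟨_, _, rfl⟩
  · rintro ⟨Z, W, rfl⟩
    refine ⟨of fun i j => ofComplexPair (Z i j) (W i j), ?_⟩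
    rfl

theorem conjTranspose_toComplex_mul_self_eq_one_iff [Fintype n] [DecidableEq n]
    (A : Matrix n n ℍ[ℝ]) :
    (toComplex A)ᴴ * toComplex A = 1 ↔ Aᴴ * A = 1 := by
  rw [← toComplex_conjTranspose, ← toComplex_mul, ← toComplex_one, toComplex_injective.eq_iff]

end Matrix

/-- The compact symplectic group `Sp(k)` of quaternionic unitary matrices is isomorphic
(via an injective monoid homomorphism) to the group of complex `2k × 2k` matrices `B`
with `Bᴴ * B = 1` and `Bᵀ * Ω * B = Ω`, i.e. to `U(2k) ∩ Sp(2k, ℂ)`. -/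
theorem sp_realization_complex (k : ℕ) :
    ∃ f : Sp k →* Matrix (Fin k ⊕ Fin k) (Fin k ⊕ Fin k) ℂ,
      Function.Injective f ∧
      Set.range f =
        {B : Matrix (Fin k ⊕ Fin k) (Fin k ⊕ Fin k) ℂ |
          Bᴴ * B = 1 ∧ Bᵀ * Omega k * B = Omega k} := by
  refine ⟨toComplexHom.comp (Sp k).subtype, toComplex_injective.comp Subtype.val_injective, ?_⟩
  have hΩ : Omega k = J (Fin k) ℂ := rfl
  ext B
  simp only [Set.mem_range, Set.mem_ofPred_eq, hΩ]
  constructor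
  · rintro ⟨⟨A, hA⟩, rfl⟩
    have hU := (conjTranspose_toComplex_mul_self_eq_one_iff A).2 hA
    exact ⟨hU, (transpose_mul_mul_eq_iff_mul_eq_map_star_mul hU _).2
      (range_toComplex.le ⟨A, rfl⟩)⟩
  · rintro ⟨hU, hΩB⟩
    obtain ⟨A, rfl⟩ :=
      range_toComplex.ge ((transpose_mul_mul_eq_iff_mul_eq_map_star_mul hU _).1 hΩB)
    exact ⟨⟨A, (conjTranspose_toComplex_mul_self_eq_one_iff A).1 hU⟩, rfl⟩
end
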